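/- Let n ≥ 2 and 1 ≤ k ≤ n. Let d₁,…,d_{n−1} be positive real numbers, let t ∈ ℝ, and let A be the n×n diagonal matrix diag(d₁,…,d_{n−1}, t). If σ_k(A) > 0, then σ_j(A) > 0 for every 1 ≤ j ≤ k; in particular A ∈ Γ_k. -/

import Mathlib

open Matrix

/-- The `k`-th elementary symmetric function of the eigenvalues of an `n × n` real
matrix `A`, characterized by `det (t • I + A) = ∑ j ≤ n, sigmaElem n j A * t ^ (n - j)`.
Concretely it is the coefficient of `t^(n-k)` in the characteristic polynomial of `-A`.
By convention `sigmaElem n 0 A = 1` and `sigmaElem n k A = 0` for `k > n`. -/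
noncomputable def sigmaElem (n k : ℕ) (A : Matrix (Fin n) (Fin n) ℝ) : ℝ :=
  if k ≤ n then ((-A).charpoly).coeff (n - k) else 0

/-- `sigmaD n k A i j = ∂σ_k/∂a_{ij} (A)`, the `(i,j)` entry of the gradient matrix
`σ_k'(A)` of the polynomial map `A ↦ σ_k(A)`. -/
noncomputable def sigmaD (n k : ℕ) (A : Matrix (Fin n) (Fin n) ℝ) (i j : Fin n) : ℝ :=
  deriv (fun t : ℝ => sigmaElem n k (A + t • Matrix.single i j 1)) 0

/-- The gradient matrix `σ_k'(A)` of the polynomial map `A ↦ σ_k(A)`. -/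
noncomputable def sigmaGrad (n k : ℕ) (A : Matrix (Fin n) (Fin n) ℝ) :
    Matrix (Fin n) (Fin n) ℝ :=
  Matrix.of fun i j => sigmaD n k A i j

/-- The Gårding cone `Γ_k`: real symmetric `n × n` matrices with `σ_j(A) > 0` for
`j = 1, …, k`. -/
def GammaCone (n k : ℕ) : Set (Matrix (Fin n) (Fin n) ℝ) :=
  {A | A.IsSymm ∧ ∀ j, 1 ≤ j → j ≤ k → 0 < sigmaElem n j A}

/-- Partial derivative `∂u/∂x_i` of `u : ℝⁿ → ℝ`. -/
noncomputable def pd (n : ℕ) (u : (Fin n → ℝ) → ℝ) (i : Fin n) (x : Fin n → ℝ) : ℝ :=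
  fderiv ℝ u x (Pi.single i 1)

/-- The Hessian matrix `D²u(x) = (∂²u/∂x_i∂x_j (x))`. -/
noncomputable def hess (n : ℕ) (u : (Fin n → ℝ) → ℝ) (x : Fin n → ℝ) :
    Matrix (Fin n) (Fin n) ℝ :=
  Matrix.of fun i j => pd n (fun y => pd n u j y) i x

/-!
Write `A = diag(x₁, …, x_{n-1}, t)` with `x_i > 0` and let `e_j` be the elementary symmetric
functions of the `x_i`, so that `σ_{j+1}(A) = e_{j+1} + t e_j`. The ratios `e_{j+1} / e_j`
decrease in `j` (induction on the number of variables, via `e'_{j+1} = e_{j+1} + x e_j`), hence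
`e_k σ_{j+1}(A) ≥ e_j σ_{k+1}(A)` for `j ≤ k`, and positivity of `σ_{k+1}(A)` propagates down.
-/

namespace Multiset

section CommSemiring

variable {R : Type*} [CommSemiring R]

@[simp]
theorem esymm_zero (s : Multiset R) : s.esymm 0 = 1 := by
  simp [esymm]

theorem esymm_eq_zero_of_card_lt {s : Multiset R} {j : ℕ} (h : card s < j) : s.esymm j = 0 := by
  simp [esymm, powersetCard_eq_empty j h]

theorem esymm_cons_succ (a : R) (s : Multiset R) (j : ℕ) :
    (a ::ₘ s).esymm (j + 1) = s.esymm (j + 1) + a * s.esymm j := by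
  simp [esymm, powersetCard_cons, map_map, sum_map_mul_left]

end CommSemiring

variable {s : Multiset ℝ}

theorem esymm_nonneg (hs : ∀ x ∈ s, 0 ≤ x) (j : ℕ) : 0 ≤ s.esymm j :=
  sum_nonneg fun _ hy => by
    obtain ⟨t, ht, rfl⟩ := mem_map.mp hy
    exact prod_nonneg fun x hx => hs x (subset_of_le (mem_powersetCard.mp ht).1 hx)

theorem esymm_pos (hs : ∀ x ∈ s, 0 < x) {j : ℕ} (hj : j ≤ card s) : 0 < s.esymm j := by
  induction s using Multiset.induction_on generalizing j with
  | empty => simp_all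
  | cons x s ih =>
    have hs' : ∀ y ∈ s, 0 < y := fun y hy => hs y (mem_cons_of_mem hy)
    rcases j with _ | j
    · simp
    · rw [esymm_cons_succ]
      exact add_pos_of_nonneg_of_pos (esymm_nonneg (fun y hy => (hs' y hy).le) _)
        (mul_pos (hs x (mem_cons_self x s)) (ih hs' (by simpa using hj)))

theorem esymm_mul_esymm_succ_le (hs : ∀ x ∈ s, 0 ≤ x) {a b : ℕ} (hab : a ≤ b) :
    s.esymm a * s.esymm (b + 1) ≤ s.esymm (a + 1) * s.esymm b := by
  induction s using Multiset.induction_on generalizing a b with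
  | empty =>
    rw [esymm_eq_zero_of_card_lt (j := b + 1) (by simp),
      esymm_eq_zero_of_card_lt (j := a + 1) (by simp)]
    simp
  | cons x s ih =>
    have hx : 0 ≤ x := hs x (mem_cons_self x s)
    have hs : ∀ y ∈ s, 0 ≤ y := fun y hy => hs y (mem_cons_of_mem hy)
    have ih := fun {a b : ℕ} (hab : a ≤ b) => ih hs hab
    have he := esymm_nonneg hs
    rcases a with _ | a <;> rcases b with _ | b
    · simp
    · have h := ih (a := 0) (b := b + 1) (by omega)
      simp only [esymm_zero, esymm_cons_succ, one_mul, zero_add] at h ⊢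
      nlinarith [h, mul_nonneg (mul_nonneg hx (he 1)) (he b),
        mul_nonneg (mul_nonneg hx hx) (he b)]
    · omega
    · have hab : a ≤ b := by omega
      -- the coefficients of `x`: `e_a e_{b+2} ≤ e_{a+1} e_{b+1} ≤ e_{a+2} e_b`
      have mid : s.esymm a * s.esymm (b + 2) ≤ s.esymm (a + 2) * s.esymm b := by
        rcases hab.eq_or_lt with rfl | hlt
        · rw [mul_comm]
        · exact (ih (a := a) (b := b + 1) (by omega)).trans (ih (a := a + 1) (b := b) hlt)
      simp only [esymm_cons_succ]
      nlinarith [ih (a := a + 1) (b := b + 1) (by omega), mul_le_mul_of_nonneg_left mid hx,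
        mul_le_mul_of_nonneg_left (ih hab) (mul_nonneg hx hx)]

theorem esymm_cons_pos_of_le (hs : ∀ x ∈ s, 0 < x) (t : ℝ) {j k : ℕ} (hjk : j ≤ k)
    (hk : 0 < (t ::ₘ s).esymm k) : 0 < (t ::ₘ s).esymm j := by
  rcases j with _ | j
  · simp
  obtain ⟨k, rfl⟩ : ∃ k', k = k' + 1 := ⟨k - 1, by omega⟩
  rw [esymm_cons_succ] at hk ⊢
  have hkc : k ≤ card s := by
    by_contra h
    simp [esymm_eq_zero_of_card_lt (s := s) (j := k) (by omega),
      esymm_eq_zero_of_card_lt (s := s) (j := k + 1) (by omega)] at hk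
  have hek : 0 < s.esymm k := esymm_pos hs hkc
  have hej : 0 < s.esymm j := esymm_pos hs (by omega)
  have ratio := esymm_mul_esymm_succ_le (fun x hx => (hs x hx).le) (show j ≤ k by omega)
  have key : s.esymm j * (s.esymm (k + 1) + t * s.esymm k)
      ≤ s.esymm k * (s.esymm (j + 1) + t * s.esymm j) := by
    nlinarith
  exact pos_of_mul_pos_right ((mul_pos hej hk).trans_le key) hek.le

end Multiset

theorem sigmaElem_diagonal (n j : ℕ) (d : Fin n → ℝ) :
    sigmaElem n j (diagonal d) = (Finset.univ.val.map d).esymm j := by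
  unfold sigmaElem
  split_ifs with hjn
  · rw [diagonal_neg, charpoly_diagonal]
    simp only [map_neg, sub_neg_eq_add]
    rw [Finset.prod_eq_multiset_prod, Multiset.prod_X_add_C_coeff' _ _ (by simp)]
    simp [Nat.sub_sub_self hjn]
  · rw [Multiset.esymm_eq_zero_of_card_lt (by simpa using hjn)]

theorem sigmaElem_diagonal_pos_of_le {n j k : ℕ} {d : Fin n → ℝ} (l : Fin n)
    (hd : ∀ i, i ≠ l → 0 < d i) (hjk : j ≤ k) (hk : 0 < sigmaElem n k (diagonal d)) :
    0 < sigmaElem n j (diagonal d) := by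
  rw [sigmaElem_diagonal, ← Multiset.cons_erase (Finset.mem_univ_val l), Multiset.map_cons]
    at hk ⊢
  refine Multiset.esymm_cons_pos_of_le (fun x hx => ?_) (d l) hjk hk
  obtain ⟨i, hi, rfl⟩ := Multiset.mem_map.mp hx
  exact hd i (Finset.univ.nodup.mem_erase_iff.mp hi).1

theorem le_of_sigmaElem_pos {n k : ℕ} {A : Matrix (Fin n) (Fin n) ℝ}
    (h : 0 < sigmaElem n k A) : k ≤ n := by
  by_contra hkn
  simp [sigmaElem, hkn] at h

theorem statement12_general (n k : ℕ)
    (d : Fin n → ℝ) (hd : ∀ i : Fin n, (i : ℕ) < n - 1 → 0 < d i)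
    (hk : 0 < sigmaElem n k (Matrix.diagonal d)) :
    (∀ j, 1 ≤ j → j ≤ k → 0 < sigmaElem n j (Matrix.diagonal d)) ∧
      Matrix.diagonal d ∈ GammaCone n k := by
  have hchain : ∀ j, 1 ≤ j → j ≤ k → 0 < sigmaElem n j (Matrix.diagonal d) := by
    intro j hj hjk
    have hkn := le_of_sigmaElem_pos hk
    refine sigmaElem_diagonal_pos_of_le ⟨n - 1, by omega⟩ (fun i hi => hd i ?_) hjk hk
    have : (i : ℕ) ≠ n - 1 := fun h => hi (Fin.ext h)
    omega
  exact ⟨hchain, isSymm_diagonal d, hchain⟩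

/-- if `A = diag(d₁,…,d_{n-1}, t)` with `d_i > 0` and `σ_k(A) > 0`,
then `σ_j(A) > 0` for all `1 ≤ j ≤ k`, i.e. `A ∈ Γ_k`. -/
theorem statement12 (n k : ℕ) (hn : 2 ≤ n) (hk1 : 1 ≤ k) (hkn : k ≤ n)
    (d : Fin n → ℝ) (hd : ∀ i : Fin n, (i : ℕ) < n - 1 → 0 < d i)
    (hk : 0 < sigmaElem n k (Matrix.diagonal d)) :
    (∀ j, 1 ≤ j → j ≤ k → 0 < sigmaElem n j (Matrix.diagonal d)) ∧
      Matrix.diagonal d ∈ GammaCone n k :=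
  statement12_general n k d hd hk
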